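/- arXiv:2502.10710 — 5 statements merged into one kernel-verified Lean document; each statement's English description precedes it below -/
import Mathlib

section
/- Let {D_1,...,D_m} be a nontrivial (v,m,k,λ)-SEDF in a finite abelian group G with m ≥ 3, set D = D_1 ∪ ... ∪ D_m, and let χ be a nonprincipal character of G such that χ(D) ≠ 0. Then for each j with 1 ≤ j ≤ m, the real numbers |χ(D)|², |χ(D_j)|² and |χ(D∖D_j)|² are positive integers. -/
/-- A `(v,m,k,λ)`-strong external difference family in a finite abelian group `G`. -/
def IsSEDF {G : Type*} [CommGroup G] [Fintype G] [DecidableEq G]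
    {m : ℕ} (D : Fin m → Finset G) (k lam : ℕ) : Prop :=
  0 < m ∧ 0 < k ∧ 0 < lam ∧
  (∀ i, (D i).card = k) ∧
  (∀ i j, i ≠ j → Disjoint (D i) (D j)) ∧
  ∀ j : Fin m, ∀ g : G,
    (∑ l ∈ Finset.univ.filter (fun l => l ≠ j),
      (((D l) ×ˢ (D j)).filter (fun x => x.1 * x.2⁻¹ = g)).card)
    = if g = 1 then 0 else lam

/-!
Write `A i = χ(D i)` and `S = χ(D) = ∑ i, A i`. Since `χ` is nonprincipal, the SEDF condition gives
`(S - A i) * conj (A i) = -λ` for every `i`. Hence `S * conj (A i) = |A i|² - λ` is real, so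
`A i = c i * S` with `c i` real, `∑ i, c i = 1` and `c i ^ 2 * t = c i * t + λ`, where `t = |S|²`.
The numbers `2 c i - 1` therefore all have the same square `1 + 4λ/t` while their sum is
`2 - m ≠ 0`, which forces them, and with them the `c i` and `t`, to be rational. The norms `t`,
`c j ^ 2 * t` and `(1 - c j) ^ 2 * t` are then rational algebraic integers, hence integers, and
they are nonzero because `(S - A j) * conj (A j) = -λ ≠ 0`.
-/

open Finset ComplexConjugate Complex

namespace MonoidHom

variable {G : Type*} [Group G]

theorem map_pow_card_eq_one {M : Type*} [Monoid M] (χ : G →* M) (g : G) :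
    χ g ^ Nat.card G = 1 := by
  rw [← map_pow, pow_card_eq_one', map_one]

variable [Finite G]

theorem isIntegral_sum_apply {R : Type*} [CommRing R] (χ : G →* R) (s : Finset G) :
    IsIntegral ℤ (∑ g ∈ s, χ g) :=
  IsIntegral.sum _ fun g _ ↦
    IsIntegral.of_pow Nat.card_pos (by rw [χ.map_pow_card_eq_one]; exact isIntegral_one)

theorem conj_apply (χ : G →* ℂ) (g : G) : conj (χ g) = χ g⁻¹ := by
  rw [map_inv, Complex.inv_eq_conj
    (norm_eq_one_of_pow_eq_one (χ.map_pow_card_eq_one g) Nat.card_pos.ne')]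

end MonoidHom

theorem MonoidHom.sum_mul_conj_sum {G : Type*} [CommGroup G] [Fintype G] [DecidableEq G]
    (χ : G →* ℂ) (A B : Finset G) :
    (∑ a ∈ A, χ a) * conj (∑ b ∈ B, χ b) =
      ∑ g, (#{x ∈ A ×ˢ B | x.1 * x.2⁻¹ = g} : ℂ) * χ g := by
  simp_rw [map_sum, χ.conj_apply, sum_mul_sum, ← map_mul, ← sum_product']
  rw [← sum_fiberwise (A ×ˢ B) (fun x ↦ x.1 * x.2⁻¹)]
  refine sum_congr rfl fun g _ ↦ ?_
  rw [sum_congr rfl fun x hx ↦ congrArg χ (mem_filter.1 hx).2, sum_const, nsmul_eq_mul]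

theorem IsSEDF.sum_ne_mul_conj {G : Type*} [CommGroup G] [Fintype G] [DecidableEq G]
    {m k lam : ℕ} {D : Fin m → Finset G} (h : IsSEDF D k lam) {χ : G →* ℂ} (hχ : χ ≠ 1)
    (j : Fin m) :
    (∑ l ∈ univ.filter (· ≠ j), ∑ g ∈ D l, χ g) * conj (∑ g ∈ D j, χ g) = -lam := by
  obtain ⟨-, -, -, -, -, hdiff⟩ := h
  rw [sum_mul]
  simp_rw [χ.sum_mul_conj_sum]
  rw [sum_comm]
  simp_rw [← sum_mul, ← Nat.cast_sum, hdiff j, Nat.cast_ite, Nat.cast_zero, ite_mul,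
    zero_mul, sum_ite, sum_const_zero, zero_add]
  rw [filter_ne', sum_erase_eq_sub (mem_univ 1), ← mul_sum, sum_hom_units_eq_zero χ hχ, map_one]
  ring

theorem exists_rat_eq_of_sq_eq_of_sum_eq {ι : Type*} [Fintype ι] {x : ι → ℝ} {q : ℚ}
    (hq : q ≠ 0) (hsq : ∀ i j, x i ^ 2 = x j ^ 2) (hsum : ∑ i, x i = q) (j : ι) :
    ∃ r : ℚ, x j = r := by
  classical
  set n : ℤ := ∑ i, if x i = x j then 1 else -1
  have hx : ∀ i, x i = (if x i = x j then 1 else -1 : ℤ) * x j := by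
    intro i
    split_ifs with h
    · simp [h]
    · simpa [h] using (sq_eq_sq_iff_eq_or_eq_neg.1 (hsq i j)).resolve_left h
  have hn : (n : ℝ) * x j = q := by
    rw [← hsum, Int.cast_sum, sum_mul]
    exact sum_congr rfl fun i _ ↦ (hx i).symm
  have hn0 : (n : ℝ) ≠ 0 := by
    intro h0
    rw [h0, zero_mul] at hn
    exact hq (by exact_mod_cast hn.symm)
  exact ⟨q / n, by push_cast; field_simp; linarith⟩

theorem exists_rat_of_sq_mul_eq_mul_add {ι : Type*} [Fintype ι] (hι : Fintype.card ι ≠ 2)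
    {c : ι → ℝ} {t : ℝ} {lam : ℚ} (hlam : lam ≠ 0) (hquad : ∀ i, c i ^ 2 * t = c i * t + lam)
    (hsum : ∑ i, c i = 1) (j : ι) :
    (∃ r : ℚ, c j = r) ∧ ∃ r : ℚ, t = r := by
  have hdisc : ∀ i, (c i ^ 2 - c i) * t = lam := fun i ↦ by linear_combination hquad i
  have ht : t ≠ 0 := by
    rintro rfl
    exact hlam (by exact_mod_cast (hdisc j).symm.trans (mul_zero _))
  obtain ⟨r, hr⟩ := exists_rat_eq_of_sq_eq_of_sum_eq (x := fun i ↦ 2 * c i - 1)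
    (q := 2 - Fintype.card ι) (sub_ne_zero.2 (by exact_mod_cast hι.symm))
    (fun i i' ↦ by linear_combination 4 * mul_right_cancel₀ ht ((hdisc i).trans (hdisc i').symm))
    (by simp [sum_sub_distrib, ← mul_sum, hsum]) j
  set s : ℚ := (r + 1) / 2
  have hc : c j = s := by simp only [s]; push_cast; linarith
  have hc0 : c j ^ 2 - c j ≠ 0 := left_ne_zero_of_mul (by rw [hdisc j]; exact_mod_cast hlam)
  refine ⟨⟨s, hc⟩, lam / (s ^ 2 - s), ?_⟩
  rw [Rat.cast_div, Rat.cast_sub, Rat.cast_pow, ← hc, eq_div_iff hc0, mul_comm, hdisc j]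

theorem Complex.eq_ofReal_mul_of_mul_conj_eq {S A : ℂ} {r : ℝ} (hS : S ≠ 0)
    (h : S * conj A = r) : A = ↑(r / normSq S) * S := by
  have h' : conj S * A = r := by simpa [mul_comm] using congrArg conj h
  rw [ofReal_div, div_mul_eq_mul_div, eq_div_iff (ofReal_ne_zero.2 (normSq_pos.2 hS).ne'),
    ← h', ← mul_conj]
  ring

theorem exists_rat_normSq_of_sum_sub_mul_conj_eq {ι : Type*} [Fintype ι]
    (hι : Fintype.card ι ≠ 2) {A : ι → ℂ} {lam : ℚ} (hlam : lam ≠ 0) (hS : ∑ i, A i ≠ 0)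
    (hA : ∀ i, (∑ i', A i' - A i) * conj (A i) = -lam) (j : ι) :
    (∃ q : ℚ, normSq (∑ i, A i) = q) ∧ (∃ q : ℚ, normSq (A j) = q) ∧
      ∃ q : ℚ, normSq (∑ i, A i - A j) = q := by
  set S := ∑ i, A i
  set c : ι → ℝ := fun i ↦ (normSq (A i) - lam) / normSq S
  have hAc : ∀ i, A i = c i * S := fun i ↦ eq_ofReal_mul_of_mul_conj_eq hS <| by
    push_cast
    rw [← mul_conj]
    linear_combination hA i
  have hquad : ∀ i, c i ^ 2 * normSq S = c i * normSq S + lam := by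
    intro i
    have h1 : normSq (A i) = c i ^ 2 * normSq S := by
      rw [hAc i, normSq_mul, normSq_ofReal]
      ring
    have h2 : c i * normSq S = normSq (A i) - lam := div_mul_cancel₀ _ (normSq_pos.2 hS).ne'
    linarith
  have hsum : ∑ i, c i = 1 := by
    have : ((∑ i, c i : ℝ) : ℂ) * S = 1 * S := by
      rw [one_mul, ofReal_sum, sum_mul]
      exact sum_congr rfl fun i _ ↦ (hAc i).symm
    exact_mod_cast mul_right_cancel₀ hS this
  obtain ⟨⟨r, hr⟩, ⟨t, ht⟩⟩ := exists_rat_of_sq_mul_eq_mul_add hι hlam hquad hsum j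
  refine ⟨⟨t, ht⟩, ⟨r ^ 2 * t, ?_⟩, ⟨(1 - r) ^ 2 * t, ?_⟩⟩
  · rw [hAc j, normSq_mul, normSq_ofReal, hr, ht]
    push_cast
    ring
  · rw [hAc j, ← one_sub_mul, ← ofReal_one, ← ofReal_sub, normSq_mul, normSq_ofReal, hr, ht]
    push_cast
    ring

theorem Complex.exists_pos_nat_eq_normSq_of_isIntegral {z : ℂ} (hz : IsIntegral ℤ z)
    (hz0 : z ≠ 0) {q : ℚ} (hq : normSq z = q) : ∃ n : ℕ, 0 < n ∧ normSq z = n := by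
  have hint : IsIntegral ℤ (algebraMap ℚ ℂ q) := by
    rw [eq_ratCast, ← ofReal_ratCast, ← hq, ← mul_conj]
    exact hz.mul (map_isIntegral_int (starRingEnd ℂ) hz)
  obtain ⟨n, rfl⟩ := IsIntegrallyClosed.isIntegral_iff.1
    ((isIntegral_algebraMap_iff (algebraMap ℚ ℂ).injective).1 hint)
  rw [algebraMap_int_eq, eq_intCast, Rat.cast_intCast] at hq
  have hn : 0 < n := by exact_mod_cast hq ▸ normSq_pos.2 hz0
  lift n to ℕ using hn.le
  exact ⟨n, by exact_mod_cast hn, by simpa using hq⟩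

theorem sedf_char_normSq_int_general {G : Type*} [CommGroup G] [Fintype G] [DecidableEq G]
    {m k lam : ℕ}
    (D : Fin m → Finset G) (h : IsSEDF D k lam) (hm : 3 ≤ m)
    (χ : G →* ℂ) (hχ : χ ≠ 1)
    (hD : (∑ g ∈ Finset.univ.biUnion D, χ g) ≠ 0) (j : Fin m) :
    (∃ n : ℕ, 0 < n ∧ Complex.normSq (∑ g ∈ Finset.univ.biUnion D, χ g) = n) ∧
    (∃ n : ℕ, 0 < n ∧ Complex.normSq (∑ g ∈ D j, χ g) = n) ∧
    (∃ n : ℕ, 0 < n ∧ Complex.normSq (∑ g ∈ (Finset.univ.biUnion D) \ D j, χ g) = n) := by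
  obtain ⟨-, -, hlam_pos, -, hdisj, -⟩ := id h
  set A : Fin m → ℂ := fun i ↦ ∑ g ∈ D i, χ g
  have hS : ∑ g ∈ univ.biUnion D, χ g = ∑ i, A i :=
    sum_biUnion fun x _ y _ hxy ↦ hdisj x y hxy
  have hSj : ∑ g ∈ univ.biUnion D \ D j, χ g = ∑ i, A i - A j := by
    rw [sum_sdiff_eq_sub (subset_biUnion_of_mem D (mem_univ j)), hS]
  have hA : ∀ i, (∑ i', A i' - A i) * conj (A i) = -((lam : ℚ) : ℂ) := fun i ↦ by
    rw [← sum_erase_eq_sub (mem_univ i), ← filter_ne', Rat.cast_natCast]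
    exact h.sum_ne_mul_conj hχ i
  have hlam : (lam : ℚ) ≠ 0 := by exact_mod_cast hlam_pos.ne'
  have hAj : (∑ i, A i - A j) * conj (A j) ≠ 0 := by
    rw [hA j]
    exact_mod_cast neg_ne_zero.2 hlam
  obtain ⟨⟨t, ht⟩, ⟨a, ha⟩, ⟨b, hb⟩⟩ := exists_rat_normSq_of_sum_sub_mul_conj_eq
    (by rw [Fintype.card_fin]; omega) hlam (hS ▸ hD) hA j
  refine ⟨?_, ?_, ?_⟩ <;> apply exists_pos_nat_eq_normSq_of_isIntegral (χ.isIntegral_sum_apply _)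
  · exact hD
  · exact hS ▸ ht
  · exact (map_ne_zero _).1 (right_ne_zero_of_mul hAj)
  · exact ha
  · exact hSj ▸ left_ne_zero_of_mul hAj
  · exact hSj ▸ hb

/-- For a nontrivial `(v,m,k,λ)`-SEDF with `m ≥ 3` and a nonprincipal character `χ` with
`χ(D) ≠ 0` (where `D = D_1 ∪ ⋯ ∪ D_m`), the real numbers `|χ(D)|²`, `|χ(D_j)|²`, and
`|χ(D∖D_j)|²` are positive integers for each `j`. -/
theorem sedf_char_normSq_int {G : Type*} [CommGroup G] [Fintype G] [DecidableEq G]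
    {v m k lam : ℕ} (hv : Fintype.card G = v)
    (D : Fin m → Finset G) (h : IsSEDF D k lam) (hk : 1 < k) (hm : 3 ≤ m)
    (χ : G →* ℂ) (hχ : χ ≠ 1)
    (hD : (∑ g ∈ Finset.univ.biUnion D, χ g) ≠ 0) (j : Fin m) :
    (∃ n : ℕ, 0 < n ∧ Complex.normSq (∑ g ∈ Finset.univ.biUnion D, χ g) = n) ∧
    (∃ n : ℕ, 0 < n ∧ Complex.normSq (∑ g ∈ D j, χ g) = n) ∧
    (∃ n : ℕ, 0 < n ∧ Complex.normSq (∑ g ∈ (Finset.univ.biUnion D) \ D j, χ g) = n) :=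
  sedf_char_normSq_int_general D h hm χ hχ hD j
end

section
/- Let u = p_1^{u_1}···p_t^{u_t} be the prime power decomposition of a positive integer u, and let w be a positive integer such that u is self-conjugate modulo w. Suppose p_i divides w for i = 1,...,s and p_i does not divide w for i = s+1,...,t. If X ∈ ℤ[ζ_w] satisfies X·conj(X) ≡ 0 (mod u), then X ≡ 0 (mod p_1^{⌊u_1/2⌋}···p_s^{⌊u_s/2⌋}·p_{s+1}^{⌊(u_{s+1}+1)/2⌋}···p_t^{⌊(u_t+1)/2⌋}) in ℤ[ζ_w]. -/
/-!
Fix a prime `p ∣ u`, write `w = p ^ a * w'` with `p ∤ w'`, and pick `r` with `w' ∣ p ^ r + 1`.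
Let `q = p` if `a = 0`, and `q = ζ ^ w' - 1` if `a > 0`, in which case `p ~ q ^ φ(p ^ a)`.
Modulo `q` the root `ζ` has order dividing `w'`, so complex conjugation, which inverts `ζ`, acts on
`ℤ[ζ] / q` as the Frobenius power `x ↦ x ^ p ^ r`; moreover `ℤ[ζ] / q` is reduced because
`X ^ w' - 1` is separable over `𝔽_p`. Hence `q ∣ X * conj X` forces `q ∣ X`. Since `conj q ~ q`,
dividing `X` by `q` removes `q ^ 2` from `X * conj X`, and induction gives
`q ^ j ∣ X * conj X → q ^ ⌈j / 2⌉ ∣ X`. The resulting prime powers are pairwise coprime.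
-/

/-- A prime `p` is self-conjugate modulo `w`: writing `w = p^s · u'` with `gcd(u',p) = 1`,
there exists `r` with `p^r ≡ -1 (mod u')`. -/
def SelfConjPrime (p w : ℕ) : Prop :=
  ∃ r : ℕ, (p : ZMod ((w / p ^ w.factorization p))) ^ r = -1

/-- A positive integer `n` is self-conjugate modulo `w` if all of its prime divisors are. -/
def SelfConjugate (n w : ℕ) : Prop :=
  ∀ p : ℕ, p.Prime → p ∣ n → SelfConjPrime p w

open Polynomial

theorem SelfConjPrime.exists_dvd_pow_add_one {p w : ℕ} (h : SelfConjPrime p w) :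
    ∃ r, ordCompl[p] w ∣ p ^ r + 1 := by
  obtain ⟨r, hr⟩ := h
  exact ⟨r, (ZMod.natCast_eq_zero_iff _ _).1 (by push_cast; rw [hr]; ring)⟩

theorem Polynomial.aeval_eq_zero_of_isNilpotent_of_pow_eq_one {K T : Type*} [Field K]
    [CommRing T] [Algebra K T] {t : T} {n : ℕ} (hn : (n : K) ≠ 0) (ht : t ^ n = 1) {g : K[X]}
    (hg : IsNilpotent (aeval t g)) : aeval t g = 0 := by
  obtain ⟨k, hk⟩ := hg
  nontriviality T
  have hk0 : k ≠ 0 := by rintro rfl; simp at hk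
  set f := Submodule.IsPrincipal.generator (RingHom.ker (aeval t : K[X] →ₐ[K] T))
  have hf : ∀ h : K[X], aeval t h = 0 ↔ f ∣ h := fun h =>
    RingHom.mem_ker.symm.trans (Submodule.IsPrincipal.mem_iff_generator_dvd _)
  have hsq : Squarefree (X ^ n - 1 : K[X]) := by
    simpa using (separable_X_pow_sub_C (1 : K) hn one_ne_zero).squarefree
  have hfsq : Squarefree f := hsq.squarefree_of_dvd ((hf _).1 (by simp [ht]))
  exact (hf g).2 ((hfsq.dvd_pow_iff_dvd hk0).1 ((hf _).1 (by rw [map_pow, hk])))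

theorem Polynomial.aeval_pow_expChar_pow {B : Type*} [CommRing B] (p : ℕ) [ExpChar B p] (r : ℕ)
    (t : B) (g : ℤ[X]) : aeval (t ^ p ^ r) g = aeval t g ^ p ^ r := by
  simpa [iterateFrobenius_def] using
    aeval_algHom_apply (iterateFrobenius B p r).toIntAlgHom t g

theorem Polynomial.aeval_eq_zero_of_mul_aeval_pow_eq_zero {B : Type*} [CommRing B] {p n : ℕ}
    [Fact p.Prime] [CharP B p] (hpn : ¬ p ∣ n) {t : B} (ht : t ^ n = 1) (r : ℕ) {g : ℤ[X]}
    (h : aeval t g * aeval (t ^ p ^ r) g = 0) : aeval t g = 0 := by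
  have := ExpChar.prime (R := B) (Fact.out : p.Prime)
  rw [aeval_pow_expChar_pow, ← pow_succ'] at h
  let := ZMod.algebra B p
  rw [← aeval_map_algebraMap (ZMod p)] at h ⊢
  exact aeval_eq_zero_of_isNilpotent_of_pow_eq_one (by rwa [Ne, ZMod.natCast_eq_zero_iff]) ht
    ⟨_, h⟩

theorem dvd_of_dvd_mul_map_self {A : Type*} [CommRing A] {z : A}
    (hgen : Algebra.adjoin ℤ {z} = ⊤) (c : A →+* A) (hcz : c z * z = 1) {p n r : ℕ}
    (hp : p.Prime) (hpn : ¬ p ∣ n) (hn : n ∣ p ^ r + 1) {q : A} (hqp : q ∣ p)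
    (hqz : q ∣ z ^ n - 1) {x : A} (hx : q ∣ x * c x) : q ∣ x := by
  have := Fact.mk hp
  obtain ⟨g, rfl⟩ : ∃ g : ℤ[X], aeval z g = x := by
    rw [← AlgHom.mem_range, ← Algebra.adjoin_singleton_eq_range_aeval, hgen]; trivial
  let mk := Ideal.Quotient.mk (Ideal.span {q})
  have hmk : ∀ {y}, q ∣ y ↔ mk y = 0 := by
    intro y; rw [Ideal.Quotient.eq_zero_iff_mem, Ideal.mem_span_singleton]
  rw [hmk] at hx hqp hqz ⊢
  nontriviality A ⧸ Ideal.span {q}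
  have : CharP (A ⧸ Ideal.span {q}) p :=
    (CharP.charP_iff_prime_eq_zero hp).mpr (by simpa using hqp)
  have ht : mk z ^ n = 1 := by simpa [sub_eq_zero] using hqz
  have hct : mk (c z) = mk z ^ p ^ r := by
    obtain ⟨m, hm⟩ := hn
    have h1 : mk z ^ p ^ r * mk z = 1 := by rw [← pow_succ, hm, pow_mul, ht, one_pow]
    have h2 : mk (c z) * mk z = 1 := by rw [← map_mul, hcz, map_one]
    exact (IsUnit.of_mul_eq_one_right _ h1).mul_right_cancel (h2.trans h1.symm)
  have hmkg : ∀ y, mk (aeval y g) = aeval (mk y) g := fun y =>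
    (aeval_algHom_apply mk.toIntAlgHom y g).symm
  have hcg : c (aeval z g) = aeval (c z) g := (aeval_algHom_apply c.toIntAlgHom z g).symm
  rw [map_mul, hcg, hmkg, hmkg, hct] at hx
  rw [hmkg]
  exact aeval_eq_zero_of_mul_aeval_pow_eq_zero hpn ht r hx

theorem pow_dvd_of_pow_dvd_mul_map_self {A : Type*} [CommRing A] [IsDomain A] (c : A →+* A)
    {q : A} (hq : q ≠ 0) (hcq : Associated q (c q)) (hdvd : ∀ x, q ∣ x * c x → q ∣ x) :
    ∀ (j : ℕ) (x : A), q ^ j ∣ x * c x → q ^ ((j + 1) / 2) ∣ x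
  | 0, x, _ => by simp
  | 1, x, h => by simpa using hdvd x (by simpa using h)
  | j + 2, x, h => by
    obtain ⟨y, rfl⟩ := hdvd x (dvd_trans (dvd_pow_self q (by omega)) h)
    obtain ⟨u, hu⟩ := hcq
    have hy : q ^ j ∣ y * c y := by
      rw [map_mul, ← hu, pow_add, mul_comm,
        show q * y * (q * u * c y) = q ^ 2 * (y * c y) * u by ring,
        Units.dvd_mul_right] at h
      exact (mul_dvd_mul_iff_left (pow_ne_zero 2 hq)).1 h
    rw [show (j + 2 + 1) / 2 = (j + 1) / 2 + 1 by omega, pow_succ']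
    exact mul_dvd_mul_left q (pow_dvd_of_pow_dvd_mul_map_self c hq ⟨u, hu⟩ hdvd j y hy)

theorem associated_pow_sub_one_map {A : Type*} [CommRing A] {c : A →+* A} {z : A}
    (hcz : c z * z = 1) (k : ℕ) : Associated (z ^ k - 1) (c (z ^ k - 1)) := by
  refine ⟨-((IsUnit.of_mul_eq_one _ hcz).unit ^ k), ?_⟩
  have h : c z ^ k * z ^ k = 1 := by rw [← mul_pow, hcz, one_pow]
  simp only [Units.val_neg, Units.val_pow_eq_pow_val, IsUnit.unit_spec, map_sub, map_pow, map_one]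
  linear_combination -h

theorem IsPrimitiveRoot.associated_natCast_sub_one_pow_totient {A : Type*} [CommRing A]
    [IsDomain A] {ζ : A} {p k : ℕ} [Fact p.Prime] (hζ : IsPrimitiveRoot ζ (p ^ (k + 1))) :
    Associated (p : A) ((ζ - 1) ^ (p ^ (k + 1)).totient) := by
  have hpos : 0 < p ^ (k + 1) := pow_pos (Fact.out : p.Prime).pos _
  have hprod : (p : A) = ∏ μ ∈ primitiveRoots (p ^ (k + 1)) A, (1 - μ) := by
    rw [← eval_one_cyclotomic_prime_pow (R := A) k, cyclotomic_eq_prod_X_sub_primitiveRoots hζ,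
      eval_prod]
    simp
  rw [hprod, ← hζ.card_primitiveRoots, ← Finset.prod_const]
  refine Associated.prod _ _ _ fun μ hμ => ?_
  replace hμ := (mem_primitiveRoots hpos).1 hμ
  obtain ⟨j, -, rfl⟩ := hζ.eq_pow_of_pow_eq_one hμ.pow_eq_one
  have hj : j.Coprime (p ^ (k + 1)) := (hζ.pow_iff_coprime hpos j).1 hμ
  rw [← neg_sub]
  exact (hζ.associated_sub_one_pow_sub_one_of_coprime hj).symm.neg_left

section PrimeDivisors

variable {A : Type*} [CommRing A] [IsDomain A] [CharZero A] {z : A} {c : A →+* A}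

theorem natCast_pow_dvd_of_not_dvd {w : ℕ} (hz : z ^ w = 1) (hgen : Algebra.adjoin ℤ {z} = ⊤)
    (hcz : c z * z = 1) {p : ℕ} (hp : p.Prime) (hpw : ¬ p ∣ w) (hsc : SelfConjPrime p w)
    {e : ℕ} {x : A} (hx : (p : A) ^ e ∣ x * c x) : (p : A) ^ ((e + 1) / 2) ∣ x := by
  obtain ⟨r, hr⟩ := hsc.exists_dvd_pow_add_one
  rw [Nat.factorization_eq_zero_of_not_dvd hpw, pow_zero, Nat.div_one] at hr
  refine pow_dvd_of_pow_dvd_mul_map_self c (Nat.cast_ne_zero.2 hp.ne_zero)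
    (by rw [map_natCast]) (fun y hy => ?_) e x hx
  exact dvd_of_dvd_mul_map_self hgen c hcz hp hpw hr dvd_rfl (by simp [hz]) hy

theorem natCast_pow_dvd_of_dvd {w : ℕ} (hw : w ≠ 0) (hz : IsPrimitiveRoot z w)
    (hgen : Algebra.adjoin ℤ {z} = ⊤) (hcz : c z * z = 1) {p : ℕ} (hp : p.Prime) (hpw : p ∣ w)
    (hsc : SelfConjPrime p w) {e : ℕ} {x : A} (hx : (p : A) ^ e ∣ x * c x) :
    (p : A) ^ (e / 2) ∣ x := by
  have := Fact.mk hp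
  obtain ⟨r, hr⟩ := hsc.exists_dvd_pow_add_one
  obtain ⟨k, hk⟩ := Nat.exists_eq_add_one.2 (hp.factorization_pos_of_dvd hw hpw)
  set m := (p ^ (k + 1)).totient
  have hzw' : IsPrimitiveRoot (z ^ ordCompl[p] w) (p ^ (k + 1)) :=
    hz.pow (Nat.pos_of_ne_zero hw) (by rw [← hk, mul_comm, Nat.ordProj_mul_ordCompl_eq_self])
  have hassoc : Associated (p : A) ((z ^ ordCompl[p] w - 1) ^ m) :=
    hzw'.associated_natCast_sub_one_pow_totient
  have hm : m ≠ 0 := (Nat.totient_pos.2 (pow_pos hp.pos _)).ne'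
  have hq : z ^ ordCompl[p] w - 1 ≠ 0 := fun h0 => by
    rw [h0, zero_pow hm, associated_zero_iff_eq_zero] at hassoc
    exact hp.ne_zero (by exact_mod_cast hassoc)
  have hdesc := pow_dvd_of_pow_dvd_mul_map_self c hq (associated_pow_sub_one_map hcz _)
    (fun y hy => dvd_of_dvd_mul_map_self hgen c hcz hp (Nat.not_dvd_ordCompl hp hw) hr
      ((dvd_pow_self _ hm).trans hassoc.symm.dvd) dvd_rfl hy)
    (m * e) x (by rw [pow_mul]; exact hassoc.symm.pow_pow.dvd.trans hx)
  calc (p : A) ^ (e / 2) ∣ (z ^ ordCompl[p] w - 1) ^ (m * (e / 2)) := by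
        rw [pow_mul]; exact hassoc.pow_pow.dvd
    _ ∣ (z ^ ordCompl[p] w - 1) ^ ((m * e + 1) / 2) := by
        refine pow_dvd_pow _ ((Nat.le_div_iff_mul_le two_pos).2 ?_)
        nlinarith [Nat.div_mul_le_self e 2]
    _ ∣ x := hdesc

end PrimeDivisors

theorem IsPrimitiveRoot.conj_mul_self {ζ : ℂ} {w : ℕ} (hζ : IsPrimitiveRoot ζ w) (hw : w ≠ 0) :
    starRingEnd ℂ ζ * ζ = 1 := by
  rw [Complex.conj_mul', hζ.norm'_eq_one hw]
  simp

theorem IsPrimitiveRoot.conj_mem_adjoin {ζ : ℂ} {w : ℕ} (hζ : IsPrimitiveRoot ζ w) (hw : w ≠ 0)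
    {x : ℂ} (hx : x ∈ Algebra.adjoin ℤ {ζ}) : starRingEnd ℂ x ∈ Algebra.adjoin ℤ {ζ} := by
  have hconj : starRingEnd ℂ ζ = ζ ^ (w - 1) := by
    calc starRingEnd ℂ ζ = starRingEnd ℂ ζ * ζ ^ (w - 1 + 1) := by
          rw [Nat.sub_add_cancel (Nat.one_le_iff_ne_zero.2 hw), hζ.pow_eq_one, mul_one]
      _ = ζ ^ (w - 1) := by rw [pow_succ', ← mul_assoc, hζ.conj_mul_self hw, one_mul]
  have hle : (Algebra.adjoin ℤ {ζ}).map (starRingEnd ℂ).toIntAlgHom ≤ Algebra.adjoin ℤ {ζ} := by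
    rw [AlgHom.map_adjoin_singleton]
    exact Algebra.adjoin_le (Set.singleton_subset_iff.2
      (hconj ▸ pow_mem (Algebra.self_mem_adjoin_singleton ℤ ζ) _))
  exact hle ⟨x, hx, rfl⟩

theorem cyclotomic_selfconj_divisibility_general
    (t s : ℕ) (p : Fin t → ℕ) (e : Fin t → ℕ)
    (hp : ∀ i, (p i).Prime) (hinj : Function.Injective p)
    (u w : ℕ) (hu : u = ∏ i, p i ^ e i) (hw : 0 < w)
    (hsc : SelfConjugate u w)
    (hsplit : ∀ i : Fin t, ((i : ℕ) < s ↔ p i ∣ w))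
    (ζ : ℂ) (hζ : IsPrimitiveRoot ζ w)
    (X : ℂ) (hX : X ∈ Algebra.adjoin ℤ ({ζ} : Set ℂ))
    (hmod : ∃ Y ∈ Algebra.adjoin ℤ ({ζ} : Set ℂ), X * (starRingEnd ℂ) X = (u : ℂ) * Y) :
    ∃ Z ∈ Algebra.adjoin ℤ ({ζ} : Set ℂ),
      X = (∏ i : Fin t,
        if (i : ℕ) < s then (p i : ℂ) ^ (e i / 2) else (p i : ℂ) ^ ((e i + 1) / 2)) * Z := by
  set R := Algebra.adjoin ℤ ({ζ} : Set ℂ)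
  obtain ⟨Y, hY, hXY⟩ := hmod
  let z : R := ⟨ζ, Algebra.self_mem_adjoin_singleton ℤ ζ⟩
  let c : R →+* R := (starRingEnd ℂ).restrict R R fun _ => hζ.conj_mem_adjoin hw.ne'
  have hz : IsPrimitiveRoot z w := hζ.of_map_of_injective (f := R.val) Subtype.val_injective
  have hgen : Algebra.adjoin ℤ {z} = ⊤ := by
    convert Algebra.adjoin_adjoin_coe_preimage (R := ℤ) (s := ({ζ} : Set ℂ))
    ext; simp [z, Subtype.ext_iff]
  have hcz : c z * z = 1 := Subtype.ext (hζ.conj_mul_self hw.ne')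
  have hXc : (⟨X, hX⟩ * c ⟨X, hX⟩ : R) = u * ⟨Y, hY⟩ := Subtype.ext (by simpa [c] using hXY)
  have hdvd : ∀ i, (p i : R) ^ (if (i : ℕ) < s then e i / 2 else (e i + 1) / 2) ∣ ⟨X, hX⟩ := by
    intro i
    rcases eq_or_ne (e i) 0 with he | he
    · simp [he]
    have hpu : p i ^ e i ∣ u := hu ▸ Finset.dvd_prod_of_mem _ (Finset.mem_univ i)
    have hsci := hsc _ (hp i) ((dvd_pow_self _ he).trans hpu)
    have hx : (p i : R) ^ e i ∣ ⟨X, hX⟩ * c ⟨X, hX⟩ := by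
      rw [hXc, ← Nat.cast_pow]; exact (Nat.cast_dvd_cast hpu).mul_right _
    split_ifs with hi
    · exact natCast_pow_dvd_of_dvd hw.ne' hz hgen hcz (hp i) ((hsplit i).1 hi) hsci hx
    · exact natCast_pow_dvd_of_not_dvd hz.pow_eq_one hgen hcz (hp i) (mt (hsplit i).2 hi) hsci hx
  obtain ⟨Z, hZ⟩ := Finset.prod_dvd_of_coprime
    (fun i _ j _ hij => (((Nat.coprime_primes (hp i) (hp j)).2 (hinj.ne hij)).cast).pow)
    (fun i _ => hdvd i)
  exact ⟨Z, Z.2, by simpa [apply_ite] using congrArg Subtype.val hZ⟩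

/-- Let `u = p_1^{u_1} ⋯ p_t^{u_t}` (prime power decomposition) be self-conjugate modulo `w`,
with `p_i ∣ w` exactly for `i < s`.  If `X ∈ ℤ[ζ_w]` satisfies `X·conj(X) ≡ 0 (mod u)`,
then `X ≡ 0 (mod ∏_{i<s} p_i^{⌊u_i/2⌋} · ∏_{i≥s} p_i^{⌊(u_i+1)/2⌋})` in `ℤ[ζ_w]`. -/
theorem cyclotomic_selfconj_divisibility
    (t s : ℕ) (hst : s ≤ t) (p : Fin t → ℕ) (e : Fin t → ℕ)
    (hp : ∀ i, (p i).Prime) (hinj : Function.Injective p) (he : ∀ i, 0 < e i)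
    (u w : ℕ) (hu : u = ∏ i, p i ^ e i) (hw : 0 < w)
    (hsc : SelfConjugate u w)
    (hsplit : ∀ i : Fin t, ((i : ℕ) < s ↔ p i ∣ w))
    (ζ : ℂ) (hζ : IsPrimitiveRoot ζ w)
    (X : ℂ) (hX : X ∈ Algebra.adjoin ℤ ({ζ} : Set ℂ))
    (hmod : ∃ Y ∈ Algebra.adjoin ℤ ({ζ} : Set ℂ), X * (starRingEnd ℂ) X = (u : ℂ) * Y) :
    ∃ Z ∈ Algebra.adjoin ℤ ({ζ} : Set ℂ),
      X = (∏ i : Fin t,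
        if (i : ℕ) < s then (p i : ℂ) ^ (e i / 2) else (p i : ℂ) ^ ((e i + 1) / 2)) * Z :=
  cyclotomic_selfconj_divisibility_general t s p e hp hinj u w hu hw hsc hsplit ζ hζ X hX hmod
end

section
/- Suppose there exists a (v,m,k,λ)-SEDF in a finite abelian group G with m ≥ 3. Let p and q be primes such that p^e exactly divides v and q^f exactly divides λ for some positive integers e and f, and suppose q is a primitive root modulo p^e. Let G_p be the Sylow p-subgroup of G. Then exp(G_p) ≤ v / q^{⌈f/2⌉}. -/
open Polynomial Finset ComplexConjugate
open scoped Pointwise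

theorem ZMod.isUnit_of_orderOf_eq_totient {n : ℕ} [NeZero n] {x : ZMod n}
    (h : orderOf x = n.totient) : IsUnit x :=
  (orderOf_pos_iff.1 (h ▸ Nat.totient_pos.2 (NeZero.pos n))).isUnit

theorem ZMod.orderOf_natCast_eq_totient_of_dvd {m n q : ℕ} [NeZero m] (hnm : n ∣ m)
    (h : orderOf (q : ZMod m) = m.totient) : orderOf (q : ZMod n) = n.totient := by
  have : NeZero n := ⟨fun hn => NeZero.ne m (Nat.eq_zero_of_zero_dvd (hn ▸ hnm))⟩
  set u := (isUnit_of_orderOf_eq_totient h).unit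
  have hgen : Subgroup.zpowers u = ⊤ := by
    refine Subgroup.eq_top_of_card_eq _ ?_
    rw [Nat.card_zpowers, ← orderOf_units, IsUnit.unit_spec, h, Nat.card_eq_fintype_card,
      card_units_eq_totient]
  have hgen' : ∀ x, x ∈ Subgroup.zpowers (unitsMap hnm u) := by
    rw [← MonoidHom.map_zpowers, hgen, Subgroup.map_top_of_surjective _ (unitsMap_surjective hnm)]
    exact Subgroup.mem_top
  have hq : ((unitsMap hnm u : (ZMod n)ˣ) : ZMod n) = q := by
    rw [unitsMap_def, Units.coe_map, IsUnit.unit_spec]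
    exact map_natCast (castHom hnm (ZMod n)) q
  rw [← hq, orderOf_units, orderOf_eq_card_of_forall_mem_zpowers hgen', Nat.card_eq_fintype_card,
    card_units_eq_totient]

theorem Polynomial.irreducible_cyclotomic_zmod_of_orderOf_eq_totient {n q : ℕ} [NeZero n]
    [Fact q.Prime] (h : orderOf (q : ZMod n) = n.totient) :
    Irreducible (cyclotomic n (ZMod q)) := by
  have hqn : ¬q ∣ n := (Fact.out : q.Prime).coprime_iff_not_dvd.1
    ((ZMod.isUnit_iff_coprime q n).1 (ZMod.isUnit_of_orderOf_eq_totient h))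
  refine ZMod.irreducible_of_dvd_cyclotomic_of_natDegree hqn dvd_rfl ?_
  rw [natDegree_cyclotomic, ← orderOf_units, ZMod.coe_unitOfCoprime, h]

theorem Polynomial.natDegree_cyclotomic_prime_pow_add {R : Type*} [CommRing R] [Nontrivial R]
    {p : ℕ} (hp : p.Prime) (k : ℕ) :
    (cyclotomic (p ^ (k + 1)) R).natDegree + p ^ k = p ^ (k + 1) := by
  rw [natDegree_cyclotomic, Nat.totient_prime_pow_succ hp, ← mul_add_one,
    Nat.sub_add_cancel hp.one_le, pow_succ]

theorem Polynomial.coeff_cyclotomic_prime_pow_mul {R : Type*} [CommRing R] {p k u : ℕ}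
    (hp : p.Prime) {U : R[X]} (hU : U.natDegree < p ^ k) (hu : u < p ^ (k + 1)) :
    (cyclotomic (p ^ (k + 1)) R * U).coeff u = U.coeff (u % p ^ k) := by
  have hs : 0 < p ^ k := pow_pos hp.pos k
  rw [cyclotomic_prime_pow_eq_geom_sum hp, sum_mul, finsetSum_coeff, sum_eq_single (u / p ^ k)]
  · rw [← pow_mul, coeff_X_pow_mul', if_pos (Nat.mul_div_le u _), ← Nat.mod_def]
  · intro j _ hj
    rw [← pow_mul, coeff_X_pow_mul']
    split_ifs with hju
    · refine coeff_eq_zero_of_natDegree_lt (lt_of_lt_of_le hU ?_)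
      have : j + 1 ≤ u / p ^ k := lt_of_le_of_ne ((Nat.le_div_iff_mul_le hs).2 (by linarith)) hj
      have := (Nat.le_div_iff_mul_le hs).1 this
      rw [Nat.le_sub_iff_add_le hju]
      linarith
    · rfl
  · intro h
    exact absurd (mem_range.2 ((Nat.div_lt_iff_lt_mul hs).2 (by rwa [← pow_succ']))) h

theorem Polynomial.map_intCastRingHom_eq_zero_iff (q : ℕ) (F : ℤ[X]) :
    F.map (Int.castRingHom (ZMod q)) = 0 ↔ C (q : ℤ) ∣ F := by
  rw [C_dvd_iff_dvd_coeff]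
  simp [Polynomial.ext_iff, ZMod.intCast_zmod_eq_zero_iff_dvd]

section CyclotomicIntegers

-- `(aeval ζ : ℤ[X] →ₐ[ℤ] K).range` is the ring `ℤ[ζ]`.

variable {K : Type*} [Field K] [CharZero K] {n : ℕ} {ζ : K}

theorem IsPrimitiveRoot.aeval_int_eq_zero_iff [NeZero n] (hζ : IsPrimitiveRoot ζ n) (F : ℤ[X]) :
    aeval ζ F = 0 ↔ cyclotomic n ℤ ∣ F := by
  rw [cyclotomic_eq_minpoly hζ (NeZero.pos n)]
  exact minpoly.isIntegrallyClosed_dvd_iff (hζ.isIntegral (NeZero.pos n)) F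

theorem IsPrimitiveRoot.aeval_int_eq_zero_iff_coeff_eq_coeff_mod {p k : ℕ} (hp : p.Prime)
    (hζ : IsPrimitiveRoot ζ (p ^ (k + 1))) {F : ℤ[X]} (hF : F.natDegree < p ^ (k + 1)) :
    aeval ζ F = 0 ↔ ∀ u < p ^ (k + 1), F.coeff u = F.coeff (u % p ^ k) := by
  have : NeZero (p ^ (k + 1)) := ⟨pow_ne_zero _ hp.ne_zero⟩
  have hs : 0 < p ^ k := pow_pos hp.pos k
  have hdeg := natDegree_cyclotomic_prime_pow_add (R := ℤ) hp k
  rw [hζ.aeval_int_eq_zero_iff]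
  constructor
  · rintro ⟨U, rfl⟩ u hu
    have hU : U.natDegree < p ^ k := by
      rcases eq_or_ne U 0 with rfl | hU0
      · simpa using hs
      · rw [natDegree_mul (cyclotomic_ne_zero _ ℤ) hU0] at hF
        omega
    have hu' : u % p ^ k < p ^ (k + 1) :=
      (Nat.mod_lt u hs).trans_le (Nat.pow_le_pow_right hp.pos k.le_succ)
    rw [coeff_cyclotomic_prime_pow_mul hp hU hu, coeff_cyclotomic_prime_pow_mul hp hU hu',
      Nat.mod_mod]
  · intro h
    set U : ℤ[X] := ∑ i ∈ range (p ^ k), monomial i (F.coeff i)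
    have hUcoeff : ∀ i < p ^ k, U.coeff i = F.coeff i := fun i hi => by
      simp [U, finsetSum_coeff, coeff_monomial, hi]
    have hU : U.natDegree < p ^ k := by
      refine (natDegree_sum_le_of_forall_le _ _ (n := p ^ k - 1) fun i hi => ?_).trans_lt
        (by omega)
      exact natDegree_monomial_le _ |>.trans (by rw [mem_range] at hi; omega)
    refine ⟨U, Polynomial.ext fun u => ?_⟩
    by_cases hu : u < p ^ (k + 1)
    · rw [coeff_cyclotomic_prime_pow_mul hp hU hu, hUcoeff _ (Nat.mod_lt u hs), h u hu]
    · have hΦU : (cyclotomic (p ^ (k + 1)) ℤ * U).natDegree < p ^ (k + 1) :=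
        natDegree_mul_le.trans_lt (by omega)
      rw [coeff_eq_zero_of_natDegree_lt (hF.trans_le (not_lt.1 hu)),
        coeff_eq_zero_of_natDegree_lt (hΦU.trans_le (not_lt.1 hu))]

theorem IsPrimitiveRoot.natCast_dvd_rangeRestrict_iff [NeZero n] (hζ : IsPrimitiveRoot ζ n)
    (q : ℕ) (F : ℤ[X]) :
    (q : (aeval ζ : ℤ[X] →ₐ[ℤ] K).range) ∣ (aeval ζ).rangeRestrict F ↔
      cyclotomic n (ZMod q) ∣ F.map (Int.castRingHom (ZMod q)) := by
  constructor
  · rintro ⟨y, hy⟩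
    obtain ⟨w, rfl⟩ := AlgHom.rangeRestrict_surjective _ y
    have hF : aeval ζ (F - C (q : ℤ) * w) = 0 := by
      simpa [sub_eq_zero] using congrArg Subtype.val hy
    obtain ⟨H, hH⟩ := (hζ.aeval_int_eq_zero_iff _).1 hF
    refine ⟨H.map (Int.castRingHom (ZMod q)), ?_⟩
    rw [sub_eq_iff_eq_add] at hH
    simp [hH, Polynomial.map_add, Polynomial.map_mul]
  · rintro ⟨H', hH'⟩
    obtain ⟨H, rfl⟩ := map_surjective (Int.castRingHom (ZMod q)) ZMod.intCast_surjective H'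
    obtain ⟨w, hw⟩ := (map_intCastRingHom_eq_zero_iff q (F - cyclotomic n ℤ * H)).1 (by
      simp [Polynomial.map_sub, Polynomial.map_mul, hH'])
    refine ⟨(aeval ζ).rangeRestrict w, Subtype.ext ?_⟩
    rw [sub_eq_iff_eq_add] at hw
    simp [hw, (hζ.aeval_int_eq_zero_iff _).2 dvd_rfl]

theorem IsPrimitiveRoot.prime_natCast_range_aeval (hζ : IsPrimitiveRoot ζ n) {q : ℕ}
    (hq : q.Prime) (hirr : Irreducible (cyclotomic n (ZMod q))) :
    Prime (q : (aeval ζ : ℤ[X] →ₐ[ℤ] K).range) := by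
  have : NeZero n := ⟨by rintro rfl; simp at hirr⟩
  have := Fact.mk hq
  have hdvd := hζ.natCast_dvd_rangeRestrict_iff q
  refine ⟨fun h0 => hq.ne_zero (by exact_mod_cast congrArg Subtype.val h0), fun hu => ?_, ?_⟩
  · rw [isUnit_iff_dvd_one, ← map_one (aeval ζ).rangeRestrict, hdvd, Polynomial.map_one,
      ← isUnit_iff_dvd_one] at hu
    exact hirr.not_isUnit hu
  · intro a b hab
    obtain ⟨F, rfl⟩ := AlgHom.rangeRestrict_surjective _ a
    obtain ⟨G, rfl⟩ := AlgHom.rangeRestrict_surjective _ b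
    rw [← map_mul, hdvd, Polynomial.map_mul] at hab
    simpa only [hdvd] using hirr.prime.dvd_or_dvd hab

theorem IsPrimitiveRoot.aeval_int_eq_zero_of_natCast_dvd {p k : ℕ} (hp : p.Prime)
    (hζ : IsPrimitiveRoot ζ (p ^ (k + 1))) {F : ℤ[X]} {Q : ℕ} (hF : F.natDegree < p ^ (k + 1))
    (hcoeff : ∀ u, 0 ≤ F.coeff u ∧ F.coeff u < Q)
    (hdvd : (Q : (aeval ζ : ℤ[X] →ₐ[ℤ] K).range) ∣ (aeval ζ).rangeRestrict F) :
    aeval ζ F = 0 := by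
  have : NeZero (p ^ (k + 1)) := ⟨pow_ne_zero _ hp.ne_zero⟩
  set Φ := cyclotomic (p ^ (k + 1)) ℤ
  obtain ⟨y, hy⟩ := hdvd
  obtain ⟨w, rfl⟩ := AlgHom.rangeRestrict_surjective _ y
  -- `F - Q · (w mod Φ)` vanishes at `ζ` and has degree `< p ^ (k + 1)`, so it is periodic;
  -- hence `F` is periodic modulo `Q`, and its coefficients lie in `[0, Q)`.
  have hW : aeval ζ (w %ₘ Φ) = aeval ζ w := by
    conv_rhs => rw [← modByMonic_add_div w Φ]
    simp [(hζ.aeval_int_eq_zero_iff Φ).2 dvd_rfl]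
  have hH : aeval ζ (F - C (Q : ℤ) * (w %ₘ Φ)) = 0 := by
    simpa [hW, sub_eq_zero] using congrArg Subtype.val hy
  have hHdeg : (F - C (Q : ℤ) * (w %ₘ Φ)).natDegree < p ^ (k + 1) := by
    have hWdeg : (w %ₘ Φ).natDegree ≤ Φ.natDegree :=
      natDegree_modByMonic_le w (cyclotomic.monic _ ℤ)
    have : Φ.natDegree + p ^ k = p ^ (k + 1) := natDegree_cyclotomic_prime_pow_add hp k
    have := pow_pos hp.pos k
    refine (natDegree_sub_le _ _).trans_lt (max_lt hF ((natDegree_C_mul_le _ _).trans_lt ?_))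
    omega
  rw [hζ.aeval_int_eq_zero_iff_coeff_eq_coeff_mod hp hF]
  intro u hu
  have hper := (hζ.aeval_int_eq_zero_iff_coeff_eq_coeff_mod hp hHdeg).1 hH u hu
  simp only [coeff_sub, coeff_C_mul] at hper
  have hQ : (Q : ℤ) ∣ F.coeff u - F.coeff (u % p ^ k) :=
    ⟨(w %ₘ Φ).coeff u - (w %ₘ Φ).coeff (u % p ^ k), by linear_combination hper⟩
  have h1 := hcoeff u
  have h2 := hcoeff (u % p ^ k)
  exact sub_eq_zero.1 (Int.eq_zero_of_abs_lt_dvd hQ (abs_sub_lt_iff.2 ⟨by linarith, by linarith⟩))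

theorem IsPrimitiveRoot.sum_pow_eq_zero_of_natCast_dvd {G : Type*} [Group G] [Fintype G]
    [DecidableEq G] {p k Q : ℕ} [Fact p.Prime] (hζ : IsPrimitiveRoot ζ (p ^ (k + 1)))
    {ψ : G →* Multiplicative (ZMod (p ^ (k + 1)))} (hψ : Function.Surjective ψ)
    (hQ : #{g | ψ g = 1} < Q) {E : Finset G}
    (hdvd : (Q : (aeval ζ : ℤ[X] →ₐ[ℤ] K).range) ∣
      (aeval ζ).rangeRestrict (∑ x ∈ E, X ^ (ψ x).toAdd.val)) :
    ∑ x ∈ E, ζ ^ (ψ x).toAdd.val = 0 := by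
  have hp : p.Prime := Fact.out
  have hfiber : ∀ u, #{x ∈ E | u = (ψ x).toAdd.val} < Q := fun u => by
    refine (card_le_card fun x hx => ?_).trans_lt ((MonoidHom.card_fiber_eq_of_mem_range ψ
      (hψ (.ofAdd (u : ZMod (p ^ (k + 1))))) ⟨1, map_one ψ⟩).trans_lt hQ)
    rw [mem_filter] at hx ⊢
    rw [hx.2, ZMod.natCast_zmod_val]
    exact ⟨mem_univ x, rfl⟩
  have h := hζ.aeval_int_eq_zero_of_natCast_dvd hp ?_ ?_ hdvd
  · simpa [map_sum] using h
  · refine (natDegree_sum_le_of_forall_le _ _ (n := p ^ (k + 1) - 1) fun x _ => ?_).trans_lt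
      (Nat.sub_lt (pow_pos hp.pos _) one_pos)
    exact (natDegree_X_pow_le _).trans (Nat.le_sub_one_of_lt (ZMod.val_lt _))
  · intro u
    simp only [finsetSum_coeff, coeff_X_pow, sum_boole]
    exact ⟨Nat.cast_nonneg _, Nat.cast_lt.2 (hfiber u)⟩

end CyclotomicIntegers

theorem Prime.pow_half_dvd_or_pow_half_dvd {α : Type*} [CommMonoidWithZero α]
    [IsCancelMulZero α] {p a b : α} (hp : Prime p) {n : ℕ} (h : p ^ n ∣ a * b) :
    p ^ ((n + 1) / 2) ∣ a ∨ p ^ ((n + 1) / 2) ∣ b := by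
  simp only [pow_dvd_iff_le_emultiplicity] at h ⊢
  rw [emultiplicity_mul hp] at h
  by_contra! hab
  lift emultiplicity p a to ℕ using (hab.1.trans_le le_top).ne with i
  lift emultiplicity p b to ℕ using (hab.2.trans_le le_top).ne with j
  norm_cast at h hab
  omega

theorem Complex.exists_mul_conj_eq_of_forall_sub_mul_conj_eq {ι : Type*} [Fintype ι]
    [Nonempty ι] (A : ι → ℂ) {lam : ℝ} (hlam : 0 < lam)
    (h : ∀ j, (∑ i, A i - A j) * conj (A j) = -lam) :
    ∃ i j, A i * conj (A j) = lam ∨ A i * conj (A j) = -lam := by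
  set S := ∑ i, A i
  set r : ι → ℝ := fun j => normSq (A j) - lam
  have hr : ∀ j, S * conj (A j) = r j := fun j => by
    have := h j
    rw [sub_mul, mul_conj] at this
    push_cast [r]
    linear_combination this
  obtain ⟨j₀⟩ := ‹Nonempty ι›
  by_cases hS : S = 0
  · refine ⟨j₀, j₀, Or.inl ?_⟩
    have := hr j₀
    rw [hS, zero_mul, eq_comm, ofReal_eq_zero, sub_eq_zero] at this
    rw [mul_conj, this]
  set t := normSq S
  have ht : 0 < t := normSq_pos.2 hS
  have hquad : ∀ j, r j ^ 2 = t * (r j + lam) := fun j => by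
    have := congrArg normSq (hr j)
    rw [normSq_mul, normSq_conj, normSq_ofReal] at this
    simp only [r, sub_add_cancel]
    linear_combination -this
  by_cases hconst : ∀ i j, r i = r j
  · have htr : t = Fintype.card ι * r j₀ := by
      have : (t : ℂ) = ∑ j, S * conj (A j) := by rw [← mul_sum, ← map_sum, mul_conj]
      simp only [hr, hconst _ j₀, sum_const, card_univ, nsmul_eq_mul] at this
      exact_mod_cast this
    have hcard : (1 : ℝ) ≤ Fintype.card ι := by exact_mod_cast Fintype.card_pos
    have := hquad j₀
    rw [htr] at this ht
    nlinarith
  simp only [not_forall] at hconst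
  obtain ⟨i, j, hij⟩ := hconst
  -- `r i` and `r j` are the two roots of `x ^ 2 - t x - t λ`, so their product is `-t λ`
  have hsum : r i + r j = t := mul_left_cancel₀ (sub_ne_zero.2 hij) (by
    linear_combination hquad i - hquad j)
  have hprod : r i * r j = -(t * lam) := by
    linear_combination (r i) * hsum - hquad i
  refine ⟨i, j, Or.inr (mul_left_cancel₀ (ofReal_ne_zero.2 ht.ne') ?_)⟩
  have hi : conj S * A i = r i := by simpa using congrArg conj (hr i)
  calc (t : ℂ) * (A i * conj (A j)) = (conj S * A i) * (S * conj (A j)) := by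
        rw [show (t : ℂ) = S * conj S from (mul_conj S).symm]; ring
    _ = (t : ℂ) * -lam := by rw [hi, hr j, ← ofReal_mul, hprod]; push_cast; ring

theorem MonoidHom.conj_apply_eq_apply_inv {G : Type*} [Group G] [Finite G] (χ : G →* ℂ)
    (x : G) : conj (χ x) = χ x⁻¹ := by
  have hx : χ x ^ orderOf x = 1 := by rw [← map_pow, pow_orderOf_eq_one, map_one]
  rw [← Complex.inv_eq_conj (Complex.norm_eq_one_of_pow_eq_one hx (orderOf_pos x).ne')]
  exact (eq_inv_of_mul_eq_one_left (by rw [← map_mul, inv_mul_cancel, map_one])).symm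

theorem CommGroup.exists_surjective_zmod_of_orderOf_eq {G : Type*} [CommGroup G] [Finite G]
    {p k : ℕ} [Fact p.Prime] {g : G} (hg : orderOf g = p ^ (k + 1)) :
    ∃ ψ : G →* Multiplicative (ZMod (p ^ (k + 1))), Function.Surjective ψ := by
  obtain ⟨ι, _, n, hn, ⟨e⟩⟩ := equiv_prod_multiplicative_zmod_of_finite G
  obtain ⟨i, hi⟩ : ∃ i, orderOf (e g i) = p ^ (k + 1) := by
    have hk : ¬e g ^ p ^ k = 1 := by
      rw [← map_pow, MulEquiv.map_eq_one_iff, ← orderOf_dvd_iff_pow_eq_one, hg,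
        Nat.pow_dvd_pow_iff_le_right (Fact.out : p.Prime).one_lt]
      omega
    obtain ⟨i, hi⟩ := Function.ne_iff.1 hk
    refine ⟨i, orderOf_eq_prime_pow hi ?_⟩
    rw [← Pi.pow_apply, ← map_pow, ← hg, pow_orderOf_eq_one, map_one, Pi.one_apply]
  have : NeZero (n i) := NeZero.of_gt (hn i)
  have hdvd : p ^ (k + 1) ∣ n i := by
    simpa [hi, Nat.card_eq_fintype_card] using orderOf_dvd_natCard (e g i)
  refine ⟨(ZMod.castHom hdvd _).toAddMonoidHom.toMultiplicative.comp
    ((Pi.evalMonoidHom _ i).comp e.toMonoidHom), ?_⟩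
  exact (ZMod.castHom_surjective hdvd).comp ((Function.surjective_eval i).comp e.surjective)

theorem MonoidHom.card_eq_card_mul_card_fiber_one {G H : Type*} [Group G] [Fintype G]
    [Group H] [Fintype H] [DecidableEq H] (ψ : G →* H) (hψ : Function.Surjective ψ) :
    Fintype.card G = Fintype.card H * #{g | ψ g = 1} := by
  rw [← card_univ, card_eq_sum_card_fiberwise (f := ψ) (t := univ) fun _ _ => mem_univ _,
    ← smul_eq_mul, ← card_univ, ← sum_const]
  exact sum_congr rfl fun h _ => card_fiber_eq_of_mem_range ψ (hψ h) ⟨1, map_one ψ⟩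

theorem Sylow.exists_exponent_eq_prime_pow {G : Type*} [Group G] [Finite G] {p e : ℕ}
    [Fact p.Prime] (P : Sylow p G) (he : 0 < e)
    (hpe : p ^ e ∣ Nat.card G ∧ ¬p ^ (e + 1) ∣ Nat.card G) :
    ∃ k < e, Monoid.exponent P = p ^ (k + 1) := by
  have hp : p.Prime := Fact.out
  have hcard : Nat.card P = p ^ e := by
    have hG : Nat.card G ≠ 0 := Nat.card_pos.ne'
    have h1 := (hp.pow_dvd_iff_le_factorization hG).1 hpe.1
    have h2 := mt (hp.pow_dvd_iff_le_factorization (k := e + 1) hG).2 hpe.2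
    rw [P.card_eq_multiplicity]
    congr 1
    omega
  obtain ⟨i, hi, hexp⟩ := (Nat.dvd_prime_pow hp).1 (hcard ▸ Group.exponent_dvd_nat_card)
  obtain ⟨k, rfl⟩ : ∃ k, i = k + 1 := Nat.exists_eq_succ_of_ne_zero fun hi0 => by
    rw [hi0, pow_zero, Monoid.exp_eq_one_iff] at hexp
    exact (Nat.one_lt_pow he.ne' hp.one_lt).ne' (hcard ▸ Nat.card_unique)
  exact ⟨k, hi, hexp⟩

theorem IsSEDF.sum_sub_mul_sum_inv {G : Type*} [CommGroup G] [Fintype G] [DecidableEq G]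
    {m k lam : ℕ} {D : Fin m → Finset G} (h : IsSEDF D k lam) {R : Type*} [CommRing R]
    (χ : G →* R) (hχ : ∑ g, χ g = 0) (j : Fin m) :
    (∑ l, ∑ x ∈ D l, χ x - ∑ x ∈ D j, χ x) * ∑ y ∈ D j, χ y⁻¹ = -lam := by
  calc (∑ l, ∑ x ∈ D l, χ x - ∑ x ∈ D j, χ x) * ∑ y ∈ D j, χ y⁻¹
      = ∑ l ∈ univ.filter (· ≠ j), ∑ xy ∈ D l ×ˢ D j, χ (xy.1 * xy.2⁻¹) := by
        rw [← sum_erase_eq_sub (mem_univ j), sum_mul, ← filter_ne']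
        refine sum_congr rfl fun l _ => ?_
        simp only [sum_mul_sum, sum_product, map_mul]
    _ = ∑ g, ((if g = 1 then 0 else lam : ℕ) : R) * χ g := by
        simp_rw [← h.2.2.2.2.2 j, Nat.cast_sum, sum_mul]
        rw [sum_comm]
        refine sum_congr rfl fun l _ => ?_
        rw [← sum_fiberwise_of_maps_to (g := fun xy => xy.1 * xy.2⁻¹) (t := univ)
          fun _ _ => mem_univ _]
        refine sum_congr rfl fun g _ => ?_
        rw [sum_congr rfl fun xy hxy => by rw [(mem_filter.1 hxy).2], sum_const, nsmul_eq_mul]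
    _ = -lam := by
        simp_rw [Nat.cast_ite, Nat.cast_zero, ite_mul, zero_mul]
        rw [sum_ite, sum_const_zero, zero_add, filter_ne', sum_erase_eq_sub (mem_univ _),
          ← mul_sum, hχ, map_one]
        ring

theorem IsSEDF.exists_sum_mul_sum_inv_eq {G : Type*} [CommGroup G] [Fintype G] [DecidableEq G]
    {m k lam : ℕ} {D : Fin m → Finset G} (h : IsSEDF D k lam) (χ : G →* ℂ)
    (hχ : ∑ g, χ g = 0) :
    ∃ i j, (∑ x ∈ D i, χ x) * ∑ y ∈ (D j)⁻¹, χ y = lam ∨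
      (∑ x ∈ D i, χ x) * ∑ y ∈ (D j)⁻¹, χ y = -lam := by
  have hconj (l : Fin m) : conj (∑ x ∈ D l, χ x) = ∑ y ∈ (D l)⁻¹, χ y := by
    simp [map_sum, MonoidHom.conj_apply_eq_apply_inv]
  have : Nonempty (Fin m) := ⟨⟨0, h.1⟩⟩
  obtain ⟨i, j, hij⟩ := Complex.exists_mul_conj_eq_of_forall_sub_mul_conj_eq
    (fun l => ∑ x ∈ D l, χ x) (Nat.cast_pos.2 h.2.2.1) fun j => by
      rw [hconj, sum_inv_index]
      exact_mod_cast h.sum_sub_mul_sum_inv χ hχ j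
  refine ⟨i, j, ?_⟩
  simpa only [hconj, Complex.ofReal_natCast] using hij

theorem IsSEDF.pow_le_card_fiber_one {G : Type*} [CommGroup G] [Fintype G] [DecidableEq G]
    {m k lam : ℕ} {D : Fin m → Finset G} (h : IsSEDF D k lam) {p n q f : ℕ} [Fact p.Prime]
    (hq : q.Prime) (hirr : Irreducible (cyclotomic (p ^ (n + 1)) (ZMod q))) (hf : q ^ f ∣ lam)
    {ψ : G →* Multiplicative (ZMod (p ^ (n + 1)))} (hψ : Function.Surjective ψ) :
    q ^ ((f + 1) / 2) ≤ #{g | ψ g = 1} := by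
  by_contra! hV
  have hN : 1 < p ^ (n + 1) := Nat.one_lt_pow n.succ_ne_zero (Fact.out : p.Prime).one_lt
  have := Fact.mk hN
  have hζ := Complex.isPrimitiveRoot_exp (p ^ (n + 1)) (by omega)
  set ζ := Complex.exp (2 * Real.pi * Complex.I / (p ^ (n + 1) : ℕ))
  set χ : G →* ℂ := (AddChar.zmodChar _ hζ.pow_eq_one).toMonoidHom.comp ψ
  have hχ_apply (x : G) : χ x = ζ ^ (ψ x).toAdd.val := AddChar.zmodChar_apply hζ.pow_eq_one _
  have hχ : ∑ g, χ g = 0 := by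
    refine sum_hom_units_eq_zero χ fun h1 => hζ.ne_one hN ?_
    obtain ⟨g, hg⟩ := hψ (.ofAdd 1)
    simpa [hχ_apply, hg, ZMod.val_one] using DFunLike.congr_fun h1 g
  obtain ⟨i, j, hij⟩ := h.exists_sum_mul_sum_inv_eq χ hχ
  set a := (aeval ζ : ℤ[X] →ₐ[ℤ] ℂ).rangeRestrict (∑ x ∈ D i, X ^ (ψ x).toAdd.val)
  set b := (aeval ζ : ℤ[X] →ₐ[ℤ] ℂ).rangeRestrict (∑ y ∈ (D j)⁻¹, X ^ (ψ y).toAdd.val)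
  have hab_val : (a * b : ℂ) = (∑ x ∈ D i, χ x) * ∑ y ∈ (D j)⁻¹, χ y := by
    simp [a, b, hχ_apply]
  have hab : (q : (aeval ζ : ℤ[X] →ₐ[ℤ] ℂ).range) ^ f ∣ a * b := by
    have hlam : (q : (aeval ζ : ℤ[X] →ₐ[ℤ] ℂ).range) ^ f ∣ lam := by
      exact_mod_cast Nat.cast_dvd_cast hf
    rcases hij with hij | hij
    · rwa [show a * b = lam from Subtype.ext (by push_cast [hab_val, hij]; rfl)]
    · rw [show a * b = -lam from Subtype.ext (by push_cast [hab_val, hij]; rfl)]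
      exact dvd_neg.2 hlam
  have hprod : (∑ x ∈ D i, χ x) * ∑ y ∈ (D j)⁻¹, χ y = 0 := by
    simp only [hχ_apply]
    rcases (hζ.prime_natCast_range_aeval hq hirr).pow_half_dvd_or_pow_half_dvd hab with hd | hd
    · rw [hζ.sum_pow_eq_zero_of_natCast_dvd hψ hV (E := D i) (by exact_mod_cast hd), zero_mul]
    · rw [hζ.sum_pow_eq_zero_of_natCast_dvd hψ hV (E := (D j)⁻¹) (by exact_mod_cast hd),
        mul_zero]
  have hlam : (lam : ℂ) ≠ 0 := Nat.cast_ne_zero.2 h.2.2.1.ne'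
  rcases hij with hij | hij
  · exact hlam (hij.symm.trans hprod)
  · exact hlam (neg_eq_zero.1 (hij.symm.trans hprod))

theorem sedf_sylow_exponent_bound_general {G : Type*} [CommGroup G] [Fintype G] [DecidableEq G]
    {v m k lam : ℕ} (hv : Fintype.card G = v)
    (D : Fin m → Finset G) (h : IsSEDF D k lam)
    (p q e f : ℕ) (hp : p.Prime) (hq : q.Prime) (he : 0 < e)
    (hpe : p ^ e ∣ v ∧ ¬ p ^ (e + 1) ∣ v)
    (hqf : q ^ f ∣ lam ∧ ¬ q ^ (f + 1) ∣ lam)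
    (hprim : orderOf (q : ZMod (p ^ e)) = (p ^ e).totient)
    (P : Sylow p G) :
    (Monoid.exponent ↥(P : Subgroup G) : ℝ) ≤ (v : ℝ) / q ^ ((f + 1) / 2) := by
  have := Fact.mk hp
  have := Fact.mk hq
  obtain ⟨n, hn, hexp⟩ :=
    P.exists_exponent_eq_prime_pow he (by rwa [Nat.card_eq_fintype_card, hv])
  obtain ⟨g, hg⟩ := Monoid.exists_orderOf_eq_exponent (Monoid.ExponentExists.of_finite (G := P))
  obtain ⟨ψ, hψ⟩ := CommGroup.exists_surjective_zmod_of_orderOf_eq (g := (g : G))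
    (by rw [Subgroup.orderOf_coe, hg, hexp])
  have hirr := irreducible_cyclotomic_zmod_of_orderOf_eq_totient
    (ZMod.orderOf_natCast_eq_totient_of_dvd (pow_dvd_pow p hn) hprim)
  have hcard := ψ.card_eq_card_mul_card_fiber_one hψ
  rw [hv, Fintype.card_multiplicative, ZMod.card] at hcard
  rw [hexp, le_div_iff₀ (pow_pos (Nat.cast_pos.2 hq.pos) _), hcard]
  exact_mod_cast Nat.mul_le_mul_left _ (h.pow_le_card_fiber_one hq hirr hqf.1 hψ)

/-- Jedwab–Li exponent bound: if there is a `(v,m,k,λ)`-SEDF in `G` with `m ≥ 3`,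
`p^e ∥ v`, `q^f ∥ λ` with `e, f ≥ 1`, and `q` is a primitive root modulo `p^e`,
then the exponent of the Sylow `p`-subgroup of `G` is at most `v / q^{⌈f/2⌉}`. -/
theorem sedf_sylow_exponent_bound {G : Type*} [CommGroup G] [Fintype G] [DecidableEq G]
    {v m k lam : ℕ} (hv : Fintype.card G = v)
    (D : Fin m → Finset G) (h : IsSEDF D k lam) (hm : 3 ≤ m)
    (p q e f : ℕ) (hp : p.Prime) (hq : q.Prime) (he : 0 < e) (hf : 0 < f)
    (hpe : p ^ e ∣ v ∧ ¬ p ^ (e + 1) ∣ v)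
    (hqf : q ^ f ∣ lam ∧ ¬ q ^ (f + 1) ∣ lam)
    (hprim : orderOf (q : ZMod (p ^ e)) = (p ^ e).totient)
    (P : Sylow p G) :
    (Monoid.exponent ↥(P : Subgroup G) : ℝ) ≤ (v : ℝ) / q ^ ((f + 1) / 2) :=
  sedf_sylow_exponent_bound_general hv D h p q e f hp hq he hpe hqf hprim P
end

section
/- Let D be a subset of a finite abelian group G, let p > 2 be a prime divisor of |G|, and write |G| = p^a·v' with gcd(v',p) = 1. If p^a does not divide |D|, then there exists a nonprincipal character χ of G whose order is p^s for some integer s with 1 ≤ s ≤ a such that χ(D) ≠ 0. -/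
/-!
By Sylow and Schur–Zassenhaus, `G` has a subgroup `H` of index `p ^ a`. The nontrivial
characters of `G ⧸ H` have order `p ^ s` with `1 ≤ s ≤ a` and inflate injectively to characters
of `G`. If all of these vanished on `D`, summing `ψ(D)` over the characters of `G ⧸ H` would
give, by orthogonality, `|D| = p ^ a · #{d ∈ D | d ∈ H}`.
-/

open Finset

theorem exists_subgroup_index_eq_prime_pow {G : Type*} [CommGroup G] [Finite G] {p a v : ℕ}
    [Fact p.Prime] (hcard : Nat.card G = p ^ a * v) (hv : v.Coprime p) :
    ∃ H : Subgroup G, H.index = p ^ a := by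
  obtain ⟨N, hN⟩ := Sylow.exists_subgroup_card_pow_prime p (hcard ▸ dvd_mul_right (p ^ a) v)
  have hindex : N.index = v := by
    have := N.card_mul_index
    rw [hN, hcard] at this
    exact Nat.eq_of_mul_eq_mul_left (pow_pos (Fact.out : p.Prime).pos a) this
  obtain ⟨H, hH⟩ := Subgroup.exists_left_complement'_of_coprime (N := N)
    (by rw [hN, hindex]; exact (hv.pow_right a).symm)
  exact ⟨H, hN ▸ hH.symm.index_eq_card⟩

theorem exists_orderOf_eq_prime_pow_of_ne_one {K : Type*} [Group K] [Finite K] {p a : ℕ}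
    (hp : p.Prime) (hK : Nat.card K = p ^ a) {x : K} (hx : x ≠ 1) :
    ∃ s, 1 ≤ s ∧ s ≤ a ∧ orderOf x = p ^ s := by
  obtain ⟨s, hsa, hs⟩ := (Nat.dvd_prime_pow hp).mp (hK ▸ orderOf_dvd_natCard x)
  refine ⟨s, Nat.one_le_iff_ne_zero.mpr ?_, hsa, hs⟩
  rintro rfl
  exact hx (orderOf_eq_one_iff.mp (by simpa using hs))

section Orthogonality

variable {Q R : Type*} [CommGroup Q] [Finite Q] [CommRing R] [IsDomain R]
  [HasEnoughRootsOfUnity R (Monoid.exponent Q)] [Fintype (Q →* Rˣ)]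

theorem sum_monoidHom_units_apply_eq_zero {x : Q} (hx : x ≠ 1) :
    ∑ ψ : Q →* Rˣ, (ψ x : R) = 0 := by
  obtain ⟨φ, hφ⟩ := CommGroup.exists_apply_ne_one_of_hasEnoughRootsOfUnity Q R hx
  have hshift : (φ x : R) * ∑ ψ : Q →* Rˣ, (ψ x : R) = ∑ ψ : Q →* Rˣ, (ψ x : R) := by
    rw [mul_sum]
    exact Fintype.sum_bijective (φ * ·) (Group.mulLeft_bijective φ) _ _ fun ψ => by simp
  have hφx : (φ x : R) - 1 ≠ 0 := sub_ne_zero.mpr (Units.val_eq_one.not.mpr hφ)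
  exact (mul_eq_zero.mp (by rw [sub_mul, one_mul, hshift, sub_self])).resolve_left hφx

theorem sum_sum_monoidHom_units_apply [DecidableEq Q] {ι : Type*} (f : ι → Q) (D : Finset ι) :
    ∑ ψ : Q →* Rˣ, ∑ d ∈ D, (ψ (f d) : R) = Nat.card (Q →* Rˣ) * #{d ∈ D | f d = 1} := by
  rw [sum_comm, ← sum_filter_add_sum_filter_not D (f · = 1),
    sum_congr rfl fun d hd => sum_monoidHom_units_apply_eq_zero (mem_filter.mp hd).2,
    sum_const_zero, add_zero, sum_congr rfl fun d hd => by rw [(mem_filter.mp hd).2]]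
  simp [mul_comm, Nat.card_eq_fintype_card]

end Orthogonality

section Inflation

variable {G Q : Type*} [Group G] [Group Q]

def charInflation (R : Type*) [CommMonoid R] (π : G →* Q) : (Q →* Rˣ) →* (G →* R) :=
  (MonoidHom.compHom (Units.coeHom R)).comp π.compHom'

theorem charInflation_injective (R : Type*) [CommMonoid R] {π : G →* Q}
    (hπ : Function.Surjective π) : Function.Injective (charInflation R π) := by
  intro ψ ψ' h
  ext x
  obtain ⟨g, rfl⟩ := hπ x
  exact DFunLike.congr_fun h g

end Inflation

theorem exists_char_p_power_order_ne_zero_general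
    {G : Type*} [CommGroup G] [Fintype G]
    (D : Finset G) (p a v' : ℕ) (hp : p.Prime)
    (hcard : Fintype.card G = p ^ a * v') (hgcd : Nat.Coprime v' p)
    (hD : ¬ p ^ a ∣ D.card) :
    ∃ (χ : G →* ℂ) (s : ℕ), χ ≠ 1 ∧ 1 ≤ s ∧ s ≤ a ∧ orderOf χ = p ^ s ∧
      (∑ g ∈ D, χ g) ≠ 0 := by
  classical
  have := Fact.mk hp
  obtain ⟨H, hH⟩ :=
    exists_subgroup_index_eq_prime_pow (Nat.card_eq_fintype_card.trans hcard) hgcd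
  have : NeZero (Monoid.exponent (G ⧸ H) : ℂ) :=
    ⟨Nat.cast_ne_zero.mpr Monoid.exponent_ne_zero_of_finite⟩
  have : Fintype (G ⧸ H →* ℂˣ) := Fintype.ofFinite _
  have hcardChar : Nat.card (G ⧸ H →* ℂˣ) = p ^ a := by
    rw [CommGroup.card_monoidHom_of_hasEnoughRootsOfUnity, ← hH, Subgroup.index_eq_card]
  have hinj := charInflation_injective ℂ (QuotientGroup.mk'_surjective H)
  by_contra! hzero
  have hvanish (ψ : G ⧸ H →* ℂˣ) (hψ : ψ ≠ 1) : ∑ d ∈ D, (ψ d : ℂ) = 0 := by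
    obtain ⟨s, hs1, hsa, hψs⟩ := exists_orderOf_eq_prime_pow_of_ne_one hp hcardChar hψ
    exact hzero _ s ((map_ne_one_iff _ hinj).mpr hψ) hs1 hsa
      (by rw [orderOf_injective _ hinj, hψs])
  have hsum := sum_sum_monoidHom_units_apply (R := ℂ) (QuotientGroup.mk (s := H)) D
  rw [Fintype.sum_eq_single 1 hvanish, hcardChar] at hsum
  simp only [MonoidHom.one_apply, Units.val_one, sum_const, nsmul_eq_mul, mul_one] at hsum
  exact hD ⟨_, by exact_mod_cast hsum⟩

/-- If `D` is a subset of a finite abelian group `G`, `p > 2` is a prime divisor of `|G|`,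
`|G| = p^a · v'` with `gcd(v',p) = 1`, and `p^a ∤ |D|`, then there is a nonprincipal
character `χ` of `G` of order `p^s` for some `1 ≤ s ≤ a` with `χ(D) ≠ 0`. -/
theorem exists_char_p_power_order_ne_zero
    {G : Type*} [CommGroup G] [Fintype G] [DecidableEq G]
    (D : Finset G) (p a v' : ℕ) (hp : p.Prime) (hp2 : 2 < p)
    (hpdvd : p ∣ Fintype.card G)
    (hcard : Fintype.card G = p ^ a * v') (hgcd : Nat.Coprime v' p)
    (hD : ¬ p ^ a ∣ D.card) :
    ∃ (χ : G →* ℂ) (s : ℕ), χ ≠ 1 ∧ 1 ≤ s ∧ s ≤ a ∧ orderOf χ = p ^ s ∧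
      (∑ g ∈ D, χ g) ≠ 0 :=
  exists_char_p_power_order_ne_zero_general D p a v' hp hcard hgcd hD
end

section
/- Let {D_1,...,D_m} be a (v,m,k,λ)-SEDF in a finite abelian group G with m ≥ 3 and set D = D_1 ∪ ... ∪ D_m. Let p > 2 be a prime divisor of v and let χ be a nonprincipal character of G of order p^a such that χ(D) ≠ 0. Let a_χ < b_χ be the coprime positive integers such that 1 + 4λ/|χ(D)|² = (b_χ/a_χ)². Then: if gcd(a_χ+b_χ, 2a_χ) = 1, there exists X ∈ ℤ[ζ_{p^a}] with χ(D) = 2a_χ·X and X·conj(X) = λ/(b_χ²−a_χ²); otherwise, there exists X ∈ ℤ[ζ_{p^a}] with χ(D) = a_χ·X and X·conj(X) = 4λ/(b_χ²−a_χ²). -/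
/-!
Write `c_j = χ(D_j)` and `S = χ(D) = ∑ c_j`. Expanding the SEDF condition with `χ` gives
`(S - c_j) · conj c_j = -λ` for every `j`. Hence `conj S · c_j` is real, so `c_j = t_j S` with
`t_j` real and `t_j - t_j² = -λ / |S|²`, i.e. `2a t_j = a ± b`. Since `∑ t_j = 1`, both signs
occur: `2a c₁ = (a + b) S` and `2a c₂ = (a - b) S` with `c₁, c₂ ∈ ℤ[ζ]`. A Bézout combination of
these two relations (of the halved ones when `a + b` is even) writes `S = 2a X` (resp. `S = a X`)
with `X ∈ ℤ[ζ]`, and `X · conj X` is then read off from `|S|²`.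
-/

open Finset ComplexConjugate Complex

namespace MonoidHom

variable {G : Type*} [CommGroup G] [Fintype G] (χ : G →* ℂ)

theorem conj_apply_eq_apply_inv_s17 (g : G) : conj (χ g) = χ g⁻¹ := by
  have hpow : χ g ^ Fintype.card G = 1 := by rw [← map_pow, pow_card_eq_one, map_one]
  rw [map_inv, ← inv_eq_conj (norm_eq_one_of_pow_eq_one hpow Fintype.card_ne_zero)]

theorem sum_mul_conj_sum_s17 (A B : Finset G) :
    (∑ g ∈ A, χ g) * conj (∑ g ∈ B, χ g) = ∑ x ∈ A ×ˢ B, χ (x.1 * x.2⁻¹) := by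
  simp only [map_sum, sum_mul_sum, sum_product, conj_apply_eq_apply_inv_s17, map_mul]

theorem sum_ite_one_mul_eq_neg [DecidableEq G] (hχ : χ ≠ 1) (c : ℂ) :
    ∑ g, (if g = 1 then 0 else c) * χ g = -c := by
  have : ∀ g, (if g = 1 then 0 else c) * χ g = c * χ g - if g = 1 then c else 0 := by
    intro g; split_ifs with hg <;> simp [hg]
  rw [sum_congr rfl fun g _ => this g, sum_sub_distrib, ← mul_sum, sum_hom_units_eq_zero χ hχ,
    sum_ite_eq' univ (1 : G), if_pos (mem_univ _)]
  ring

theorem sum_mem_adjoin {ζ : ℂ} (hζ : IsPrimitiveRoot ζ (orderOf χ)) (A : Finset G) :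
    ∑ g ∈ A, χ g ∈ Algebra.adjoin ℤ {ζ} := by
  have hχ : IsOfFinOrder χ := isOfFinOrder_iff_pow_eq_one.mpr
    ⟨Fintype.card G, Fintype.card_pos, by ext g; simp [← map_pow, pow_card_eq_one]⟩
  have : NeZero (orderOf χ) := ⟨hχ.orderOf_pos.ne'⟩
  refine Subalgebra.sum_mem _ fun g _ => ?_
  obtain ⟨i, -, hi⟩ := hζ.eq_pow_of_pow_eq_one (ξ := χ g) (by
    rw [← MonoidHom.pow_apply, pow_orderOf_eq_one, one_apply])
  exact hi ▸ pow_mem (Algebra.self_mem_adjoin_singleton ℤ ζ) i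

end MonoidHom

namespace Complex

theorem exists_ofReal_mul_of_sub_mul_conj_eq {S c : ℂ} {r : ℝ} (hS : S ≠ 0)
    (h : (S - c) * conj c = r) :
    ∃ t : ℝ, c = t * S ∧ (2 * t - 1) ^ 2 = 1 - 4 * r / normSq S := by
  have hN : normSq S ≠ 0 := (normSq_pos.mpr hS).ne'
  -- `conj S * c = |c|² + r` is real, so `c` is a real multiple of `S`
  obtain ⟨t, hc⟩ : ∃ t : ℝ, c = t * S := by
    have h' := congrArg conj h
    simp only [map_mul, map_sub, conj_conj, conj_ofReal] at h'
    refine ⟨(normSq c + r) / normSq S, ?_⟩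
    have hN' : (normSq S : ℂ) ≠ 0 := by exact_mod_cast hN
    push_cast
    field_simp
    linear_combination S * h' - c * mul_conj S + S * mul_conj c
  refine ⟨t, hc, ?_⟩
  have ht : (((1 - t) * t * normSq S : ℝ) : ℂ) = r := by
    rw [hc, map_mul, conj_ofReal] at h
    push_cast
    linear_combination h - (1 - t) * t * mul_conj S
  have ht : (1 - t) * t * normSq S = r := by exact_mod_cast ht
  rw [← ht]
  field_simp
  ring

theorem mul_conj_eq_of_one_add_div_normSq_eq_sq {S X : ℂ} {n : ℕ} {c a b : ℝ}
    (hS : S ≠ 0) (hSX : S = n * X) (ha : 0 < a) (hab : a < b)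
    (h : 1 + c / normSq S = (b / a) ^ 2) : X * conj X = c * a ^ 2 / (n ^ 2 * (b ^ 2 - a ^ 2)) := by
  have hN : normSq S ≠ 0 := (normSq_pos.mpr hS).ne'
  have hn : (n : ℂ) ≠ 0 := by rintro hn; exact hS (by rw [hSX, hn, zero_mul])
  have hba : (b : ℂ) ^ 2 - a ^ 2 ≠ 0 := by
    rw [sub_ne_zero, ← ofReal_pow, ← ofReal_pow, ne_eq, ofReal_inj]; nlinarith
  have hXS : X * conj X * n ^ 2 = normSq S := by
    rw [← mul_conj, hSX, map_mul, conj_natCast]; ring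
  field_simp at h
  have h : (normSq S * (b ^ 2 - a ^ 2) : ℂ) = c * a ^ 2 := by
    exact_mod_cast (by linear_combination -h : normSq S * (b ^ 2 - a ^ 2) = c * a ^ 2)
  field_simp
  linear_combination (b ^ 2 - a ^ 2 : ℂ) * hXS + h

end Complex

theorem two_mul_mul_eq_add_or_sub {t a b : ℝ} (ha : a ≠ 0) (h : (2 * t - 1) ^ 2 = (b / a) ^ 2) :
    2 * a * t = a + b ∨ 2 * a * t = a - b := by
  rcases sq_eq_sq_iff_eq_or_eq_neg.mp h with h | h
  · left; field_simp at h; linarith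
  · right; field_simp at h; linarith

theorem Finset.exists_eq_and_exists_eq_of_sum_eq {ι : Type*} {s : Finset ι} {u : ι → ℝ}
    {A B C : ℝ} (hu : ∀ i ∈ s, u i = A ∨ u i = B) (hsum : ∑ i ∈ s, u i = C) (hB : B ≤ 0)
    (hC : 0 < C) (hCA : C < A) : (∃ i ∈ s, u i = A) ∧ ∃ i ∈ s, u i = B := by
  constructor
  · by_contra! hA
    have : ∑ i ∈ s, u i ≤ 0 :=
      sum_nonpos fun i hi => ((hu i hi).resolve_left (hA i hi)).symm ▸ hB
    linarith
  · by_contra! hB'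
    have hs : s.Nonempty := nonempty_of_sum_ne_zero (hsum ▸ hC.ne')
    have : ∑ i ∈ s, u i = #s * A := by
      rw [sum_congr rfl fun i hi => (hu i hi).resolve_right (hB' i hi), sum_const, nsmul_eq_mul]
    have : (1 : ℝ) ≤ #s := by exact_mod_cast hs.card_pos
    nlinarith

namespace IsSEDF

variable {G : Type*} [CommGroup G] [Fintype G] [DecidableEq G] {m k lam : ℕ}
  {D : Fin m → Finset G}

theorem sum_biUnion {M : Type*} [AddCommMonoid M] (h : IsSEDF D k lam) (f : G → M) :
    ∑ g ∈ univ.biUnion D, f g = ∑ l, ∑ g ∈ D l, f g := by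
  obtain ⟨-, -, -, -, hdisj, -⟩ := h
  exact Finset.sum_biUnion fun i _ i' _ => hdisj i i'

theorem sum_sub_mul_conj_eq_neg (h : IsSEDF D k lam) {χ : G →* ℂ} (hχ : χ ≠ 1) (j : Fin m) :
    (∑ g ∈ univ.biUnion D, χ g - ∑ g ∈ D j, χ g) * conj (∑ g ∈ D j, χ g) = -lam := by
  calc (∑ g ∈ univ.biUnion D, χ g - ∑ g ∈ D j, χ g) * conj (∑ g ∈ D j, χ g)
      = ∑ l ∈ univ.filter (· ≠ j), ∑ x ∈ D l ×ˢ D j, χ (x.1 * x.2⁻¹) := by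
        rw [h.sum_biUnion, ← sum_erase_eq_sub (mem_univ j), ← filter_ne' univ j, sum_mul]
        exact sum_congr rfl fun l _ => χ.sum_mul_conj_sum_s17 (D l) (D j)
    _ = ∑ g, (∑ l ∈ univ.filter (· ≠ j), #{x ∈ D l ×ˢ D j | x.1 * x.2⁻¹ = g} : ℕ) * χ g := by
        simp only [← sum_fiberwise' _ (fun x : G × G => x.1 * x.2⁻¹) χ, sum_const, nsmul_eq_mul,
          Nat.cast_sum, sum_mul]
        exact sum_comm
    _ = ∑ g, (if g = 1 then 0 else (lam : ℂ)) * χ g := by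
        obtain ⟨-, -, -, -, -, hdiff⟩ := h
        simp only [hdiff j]
        push_cast
        rfl
    _ = -lam := χ.sum_ite_one_mul_eq_neg hχ _

theorem exists_two_mul_sum_eq (h : IsSEDF D k lam) {χ : G →* ℂ} (hχ : χ ≠ 1)
    (hD : ∑ g ∈ univ.biUnion D, χ g ≠ 0) {a b : ℝ} (ha : 0 < a) (hab : a < b)
    (heq : 1 + 4 * (lam : ℝ) / normSq (∑ g ∈ univ.biUnion D, χ g) = (b / a) ^ 2) :
    ∃ j₁ j₂, 2 * a * ∑ g ∈ D j₁, χ g = (a + b) * ∑ g ∈ univ.biUnion D, χ g ∧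
      2 * a * ∑ g ∈ D j₂, χ g = (a - b) * ∑ g ∈ univ.biUnion D, χ g := by
  set S := ∑ g ∈ univ.biUnion D, χ g
  choose t hc ht using fun j => exists_ofReal_mul_of_sub_mul_conj_eq (r := -lam) hD
    (by exact_mod_cast h.sum_sub_mul_conj_eq_neg hχ j)
  have hsum : ∑ j, 2 * a * t j = 2 * a := by
    have : ((∑ j, t j : ℝ) : ℂ) * S = 1 * S := by
      push_cast
      rw [sum_mul, one_mul, ← sum_congr rfl fun j _ => hc j, ← h.sum_biUnion]
    rw [← mul_sum, (by exact_mod_cast mul_right_cancel₀ hD this : ∑ j, t j = 1), mul_one]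
  obtain ⟨⟨j₁, -, h₁⟩, j₂, -, h₂⟩ := exists_eq_and_exists_eq_of_sum_eq
    (fun j _ => two_mul_mul_eq_add_or_sub ha.ne' (by rw [ht j, ← heq]; ring)) hsum
    (by linarith) (by positivity) (by linarith)
  refine ⟨j₁, j₂, ?_, ?_⟩
  · rw [hc, ← mul_assoc, ← ofReal_ofNat, ← ofReal_mul, ← ofReal_mul, h₁]; push_cast; ring
  · rw [hc, ← mul_assoc, ← ofReal_ofNat, ← ofReal_mul, ← ofReal_mul, h₂]; push_cast; ring

end IsSEDF

theorem exists_mem_eq_mul_of_isCoprime {R σ : Type*} [CommRing R] [SetLike σ R]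
    [SubringClass σ R] {T : σ} {A B : ℤ} (hAB : IsCoprime A B) {n x y S : R} (hx : x ∈ T)
    (hy : y ∈ T) (hxS : n * x = A * S) (hyS : n * y = B * S) : ∃ X ∈ T, S = n * X := by
  obtain ⟨u, w, huw⟩ := hAB
  refine ⟨u * x + w * y, add_mem (mul_mem (intCast_mem T u) hx) (mul_mem (intCast_mem T w) hy), ?_⟩
  have huw : ((u * A + w * B : ℤ) : R) = 1 := by rw [huw, Int.cast_one]
  push_cast at huw
  linear_combination -S * huw - u * hxS - w * hyS

theorem IsCoprime.of_add_sub {R : Type*} [CommRing R] {x y : R} (h : IsCoprime (x + y) (x - y)) :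
    IsCoprime x y := by
  obtain ⟨u, w, huw⟩ := h
  exact ⟨u + w, u - w, by linear_combination huw⟩

theorem IsCoprime.add_sub_of_two_mul {R : Type*} [CommRing R] {x y : R}
    (h : IsCoprime (x + y) (2 * x)) : IsCoprime (x + y) (x - y) := by
  obtain ⟨u, w, huw⟩ := h
  exact ⟨u + w, w, by linear_combination huw⟩

theorem Nat.Coprime.isCoprime_sub_of_add_eq_two_mul {a b s : ℕ} (hab : a.Coprime b)
    (hs : a + b = 2 * s) : IsCoprime (s : ℤ) (a - s) := by
  refine IsCoprime.of_add_sub ?_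
  rw [show (s : ℤ) + (a - s) = a by ring, show (s : ℤ) - (a - s) = b by omega]
  exact Nat.isCoprime_iff_coprime.mpr hab

theorem Nat.two_dvd_add_of_gcd_add_two_mul_ne_one {a b : ℕ} (hab : a.Coprime b)
    (h : (a + b).gcd (2 * a) ≠ 1) : 2 ∣ a + b := by
  by_contra h2
  refine h (Nat.Coprime.mul_right ?_ ?_)
  · exact Nat.coprime_comm.mp (Nat.prime_two.coprime_iff_not_dvd.mpr h2)
  · exact add_comm b a ▸ Nat.coprime_add_self_left.mpr hab.symm

theorem sedf_char_sum_structure_general {G : Type*} [CommGroup G] [Fintype G] [DecidableEq G]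
    {m k lam : ℕ}
    (D : Fin m → Finset G) (h : IsSEDF D k lam)
    (p : ℕ)
    (a : ℕ) (χ : G →* ℂ) (hχ : χ ≠ 1) (hord : orderOf χ = p ^ a)
    (hD : (∑ g ∈ Finset.univ.biUnion D, χ g) ≠ 0)
    (aχ bχ : ℕ) (haχ : 0 < aχ) (hab : aχ < bχ) (hcop : Nat.Coprime aχ bχ)
    (heq : 1 + 4 * (lam : ℝ) / Complex.normSq (∑ g ∈ Finset.univ.biUnion D, χ g)
      = ((bχ : ℝ) / (aχ : ℝ)) ^ 2)
    (ζ : ℂ) (hζ : IsPrimitiveRoot ζ (p ^ a)) :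
    (Nat.gcd (aχ + bχ) (2 * aχ) = 1 →
      ∃ X ∈ Algebra.adjoin ℤ ({ζ} : Set ℂ),
        (∑ g ∈ Finset.univ.biUnion D, χ g) = 2 * (aχ : ℂ) * X ∧
        X * (starRingEnd ℂ) X = (lam : ℂ) / ((bχ : ℂ) ^ 2 - (aχ : ℂ) ^ 2)) ∧
    (Nat.gcd (aχ + bχ) (2 * aχ) ≠ 1 →
      ∃ X ∈ Algebra.adjoin ℤ ({ζ} : Set ℂ),
        (∑ g ∈ Finset.univ.biUnion D, χ g) = (aχ : ℂ) * X ∧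
        X * (starRingEnd ℂ) X = 4 * (lam : ℂ) / ((bχ : ℂ) ^ 2 - (aχ : ℂ) ^ 2)) := by
  set S := ∑ g ∈ univ.biUnion D, χ g
  have hmem (j : Fin m) : ∑ g ∈ D j, χ g ∈ Algebra.adjoin ℤ {ζ} :=
    χ.sum_mem_adjoin (hord ▸ hζ) (D j)
  have ha : (0 : ℝ) < aχ := by exact_mod_cast haχ
  have hab' : (aχ : ℝ) < bχ := by exact_mod_cast hab
  have ha' : (aχ : ℂ) ≠ 0 := by exact_mod_cast haχ.ne'
  obtain ⟨j₁, j₂, h₁, h₂⟩ := h.exists_two_mul_sum_eq hχ hD ha hab' heq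
  push_cast at h₁ h₂
  refine ⟨fun hg => ?_, fun hg => ?_⟩
  · obtain ⟨X, hX, hSX⟩ := exists_mem_eq_mul_of_isCoprime (A := aχ + bχ) (B := aχ - bχ)
      (.add_sub_of_two_mul (by exact_mod_cast Nat.isCoprime_iff_coprime.mpr hg))
      (hmem j₁) (hmem j₂) (by push_cast; exact h₁) (by push_cast; exact h₂)
    refine ⟨X, hX, hSX, ?_⟩
    rw [mul_conj_eq_of_one_add_div_normSq_eq_sq (n := 2 * aχ) hD (by exact_mod_cast hSX) ha hab'
      heq]
    push_cast
    field_simp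
    ring
  · obtain ⟨s, hs⟩ := Nat.two_dvd_add_of_gcd_add_two_mul_ne_one hcop hg
    have hs' : (aχ : ℂ) + bχ = 2 * s := by exact_mod_cast hs
    obtain ⟨X, hX, hSX⟩ := exists_mem_eq_mul_of_isCoprime (n := (aχ : ℂ)) (S := S)
      (hcop.isCoprime_sub_of_add_eq_two_mul hs) (hmem j₁) (hmem j₂)
      (by push_cast; linear_combination (h₁ + S * hs') / 2)
      (by push_cast; linear_combination (h₂ - S * hs') / 2)
    refine ⟨X, hX, hSX, ?_⟩
    rw [mul_conj_eq_of_one_add_div_normSq_eq_sq hD hSX ha hab' heq]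
    push_cast
    field_simp

/-- Let `{D_1,…,D_m}` be a `(v,m,k,λ)`-SEDF in `G` with `m ≥ 3`, `D = ⋃ D_i`, `p > 2` a
prime divisor of `v`, `χ` a nonprincipal character of order `p^a` with `χ(D) ≠ 0`, and
`a_χ < b_χ` coprime positive integers with `1 + 4λ/|χ(D)|² = (b_χ/a_χ)²`.  Then:
if `gcd(a_χ+b_χ, 2a_χ) = 1`, `χ(D) = 2a_χ·X` for some `X ∈ ℤ[ζ_{p^a}]` with
`X·conj(X) = λ/(b_χ²-a_χ²)`; otherwise, `χ(D) = a_χ·X` for some `X ∈ ℤ[ζ_{p^a}]` with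
`X·conj(X) = 4λ/(b_χ²-a_χ²)`. -/
theorem sedf_char_sum_structure {G : Type*} [CommGroup G] [Fintype G] [DecidableEq G]
    {v m k lam : ℕ} (hv : Fintype.card G = v)
    (D : Fin m → Finset G) (h : IsSEDF D k lam) (hm : 3 ≤ m)
    (p : ℕ) (hp : p.Prime) (hp2 : 2 < p) (hpv : p ∣ v)
    (a : ℕ) (χ : G →* ℂ) (hχ : χ ≠ 1) (hord : orderOf χ = p ^ a)
    (hD : (∑ g ∈ Finset.univ.biUnion D, χ g) ≠ 0)
    (aχ bχ : ℕ) (haχ : 0 < aχ) (hab : aχ < bχ) (hcop : Nat.Coprime aχ bχ)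
    (heq : 1 + 4 * (lam : ℝ) / Complex.normSq (∑ g ∈ Finset.univ.biUnion D, χ g)
      = ((bχ : ℝ) / (aχ : ℝ)) ^ 2)
    (ζ : ℂ) (hζ : IsPrimitiveRoot ζ (p ^ a)) :
    (Nat.gcd (aχ + bχ) (2 * aχ) = 1 →
      ∃ X ∈ Algebra.adjoin ℤ ({ζ} : Set ℂ),
        (∑ g ∈ Finset.univ.biUnion D, χ g) = 2 * (aχ : ℂ) * X ∧
        X * (starRingEnd ℂ) X = (lam : ℂ) / ((bχ : ℂ) ^ 2 - (aχ : ℂ) ^ 2)) ∧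
    (Nat.gcd (aχ + bχ) (2 * aχ) ≠ 1 →
      ∃ X ∈ Algebra.adjoin ℤ ({ζ} : Set ℂ),
        (∑ g ∈ Finset.univ.biUnion D, χ g) = (aχ : ℂ) * X ∧
        X * (starRingEnd ℂ) X = 4 * (lam : ℂ) / ((bχ : ℂ) ^ 2 - (aχ : ℂ) ^ 2)) :=
  sedf_char_sum_structure_general D h p a χ hχ hord hD aχ bχ haχ hab hcop heq ζ hζ
end
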